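/- arXiv:2304.12860 — 2 statements merged into one kernel-verified Lean document; each statement's English description precedes it below -/
import Mathlib

section
/- Let x : [0,∞) → ℝ be continuous and positive with x(t) ≤ K₁ for all t, and suppose there are constants c > 0, r > 0, and a function ε : [0,∞) → ℝ with ε(t) → 0 such that for all t > 0: (1/t)·log(x(t)/x(0)) ≤ c − r·⟨x⟩(t) + ε(t), where ⟨x⟩(t) = (1/t)∫₀^t x(s)ds. Then limsup_{t→∞} ⟨x⟩(t) ≤ c/r. -/
open Filter MeasureTheory

theorem limsup_time_average_le (x : ℝ → ℝ) (K₁ c r : ℝ) (ε : ℝ → ℝ)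
    (hcont : Continuous x) (hpos : ∀ t, 0 < x t) (hbdd : ∀ t, x t ≤ K₁)
    (hc : 0 < c) (hr : 0 < r) (hε : Tendsto ε atTop (nhds 0))
    (hineq : ∀ t > 0, (1 / t) * Real.log (x t / x 0) ≤
      c - r * ((1 / t) * ∫ s in (0:ℝ)..t, x s) + ε t) :
    limsup (fun t : ℝ => (1 / t) * ∫ s in (0:ℝ)..t, x s) atTop ≤ c / r := by
  set u : ℝ → ℝ := fun t => (1 / t) * ∫ s in (0:ℝ)..t, x s with hu
  set F : ℝ → ℝ := fun t => ∫ s in (0:ℝ)..t, x s with hF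
  have hx0 : 0 < x 0 := hpos 0
  have hFderiv : ∀ t : ℝ, HasDerivAt F (x t) t := fun t =>
    (hcont.integral_hasStrictDerivAt 0 t).hasDerivAt
  have hFc : Continuous F := continuous_iff_continuousAt.2 fun t => (hFderiv t).continuousAt
  -- u is eventually nonneg
  have hunn : ∀ᶠ t in atTop, 0 ≤ u t := by
    filter_upwards [eventually_gt_atTop 0] with t ht
    have h1 : 0 ≤ F t :=
      intervalIntegral.integral_nonneg ht.le (fun s _ => (hpos s).le)
    exact mul_nonneg (one_div_nonneg.2 ht.le) h1
  have hcob : IsCoboundedUnder (· ≤ ·) atTop u :=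
    IsBoundedUnder.isCoboundedUnder_le ⟨0, by simpa using hunn⟩
  -- main step: ∀ δ > 0, eventually u t ≤ c/r + δ
  have key : ∀ δ : ℝ, 0 < δ → ∀ᶠ t in atTop, u t ≤ c / r + δ := by
    intro δ hδ
    set c' : ℝ := c + r * δ / 2 with hc'
    have hc'pos : 0 < c' := by positivity
    obtain ⟨T, hT⟩ := (eventually_atTop.1
      ((hε.eventually (gt_mem_nhds (show (0:ℝ) < r * δ / 2 by positivity)))))
    set T' : ℝ := max T 1 with hT'
    have hT'1 : (1:ℝ) ≤ T' := le_max_right T 1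
    have hT'0 : (0:ℝ) < T' := lt_of_lt_of_le one_pos hT'1
    -- pointwise exponential bound for t ≥ T'
    have hxb : ∀ t : ℝ, T' ≤ t → x t * Real.exp (r * F t) ≤ x 0 * Real.exp (c' * t) := by
      intro t ht
      have ht0 : 0 < t := lt_of_lt_of_le hT'0 ht
      have ht' : t ≠ 0 := ht0.ne'
      have hε' : ε t < r * δ / 2 := hT t (le_trans (le_max_left T 1) ht)
      have h1 := hineq t ht0
      have h3 : (1 / t) * Real.log (x t / x 0) ≤ c - r * ((1 / t) * F t) + r * δ / 2 :=
        le_trans h1 (by linarith)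
      have h4 := mul_le_mul_of_nonneg_left h3 ht0.le
      have e1 : t * ((1 / t) * Real.log (x t / x 0)) = Real.log (x t / x 0) := by
        field_simp
      have e2 : t * (c - r * ((1 / t) * F t) + r * δ / 2) = c' * t - r * F t := by
        rw [hc']; field_simp; ring
      rw [e1, e2] at h4
      have h5 : x t / x 0 ≤ Real.exp (c' * t - r * F t) :=
        (Real.log_le_iff_le_exp (div_pos (hpos t) hx0)).1 h4
      have h6 : x t ≤ x 0 * Real.exp (c' * t - r * F t) := by
        rw [div_le_iff₀ hx0] at h5; linarith [h5]
      calc x t * Real.exp (r * F t)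
          ≤ (x 0 * Real.exp (c' * t - r * F t)) * Real.exp (r * F t) :=
            mul_le_mul_of_nonneg_right h6 (Real.exp_pos _).le
        _ = x 0 * Real.exp (c' * t) := by
            rw [mul_assoc, ← Real.exp_add]; ring_nf
    -- Gronwall: exp(r F t) ≤ A exp(c' t) on [T', ∞)
    set A : ℝ := Real.exp (r * F T') + r * x 0 / c' with hA
    have hApos : 0 < A :=
      add_pos (Real.exp_pos _) (div_pos (mul_pos hr hx0) hc'pos)
    have hGH : ∀ t : ℝ, T' ≤ t → Real.exp (r * F t) ≤ A * Real.exp (c' * t) := by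
      intro t ht
      have ht0 : 0 < t := lt_of_lt_of_le hT'0 ht
      set K : ℝ → ℝ := fun s => Real.exp (r * F s)
        - (r * x 0 / c') * Real.exp (c' * s) with hK
      have hKderiv : ∀ s : ℝ, HasDerivAt K
          (Real.exp (r * F s) * (r * x s)
            - (r * x 0 / c') * (Real.exp (c' * s) * (c' * 1))) s := fun s =>
        (((hFderiv s).const_mul r).exp).sub
          ((((hasDerivAt_id s).const_mul c').exp).const_mul (r * x 0 / c'))
      have hKc : Continuous K := by
        apply Continuous.sub
        · exact Real.continuous_exp.comp (continuous_const.mul hFc)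
        · exact continuous_const.mul
            (Real.continuous_exp.comp (continuous_const.mul continuous_id))
      have hanti : AntitoneOn K (Set.Ici T') := by
        apply antitoneOn_of_deriv_nonpos (convex_Ici T') hKc.continuousOn
        · exact fun s _ => (hKderiv s).differentiableAt.differentiableWithinAt
        · intro s hs
          rw [interior_Ici] at hs
          rw [(hKderiv s).deriv]
          have hb := hxb s (le_of_lt hs)
          have e3 : (r * x 0 / c') * (Real.exp (c' * s) * (c' * 1))
              = r * (x 0 * Real.exp (c' * s)) := by
            field_simp
          have e4 : Real.exp (r * F s) * (r * x s) = r * (x s * Real.exp (r * F s)) := by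
            ring
          rw [e3, e4]
          have := mul_le_mul_of_nonneg_left hb hr.le
          linarith
      have hKle : K t ≤ K T' := hanti (Set.self_mem_Ici) (Set.mem_Ici.2 ht) ht
      have hexpT : (1:ℝ) ≤ Real.exp (c' * t) :=
        Real.one_le_exp (mul_nonneg hc'pos.le ht0.le)
      have h2 : (0:ℝ) ≤ (r * x 0 / c') * Real.exp (c' * T') :=
        mul_nonneg (div_nonneg (mul_nonneg hr.le hx0.le) hc'pos.le) (Real.exp_pos _).le
      simp only [hK] at hKle
      calc Real.exp (r * F t)
          ≤ Real.exp (r * F T') - (r * x 0 / c') * Real.exp (c' * T')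
            + (r * x 0 / c') * Real.exp (c' * t) := by linarith
        _ ≤ Real.exp (r * F T') * Real.exp (c' * t)
            + (r * x 0 / c') * Real.exp (c' * t) := by
            have h1 : Real.exp (r * F T') ≤ Real.exp (r * F T') * Real.exp (c' * t) :=
              le_mul_of_one_le_right (Real.exp_pos _).le hexpT
            linarith
        _ = A * Real.exp (c' * t) := by rw [hA]; ring
    -- conclude: eventually u t ≤ c/r + δ
    set B : ℝ := max (Real.log A) 0 with hB
    have hBnn : 0 ≤ B := le_max_right _ _
    filter_upwards [eventually_ge_atTop T', eventually_ge_atTop (2 * B / (r * δ) + 1)]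
      with t ht1 ht2
    have ht0 : 0 < t := lt_of_lt_of_le hT'0 ht1
    have h1 : r * F t ≤ Real.log A + c' * t := by
      have h2 : Real.log (Real.exp (r * F t)) ≤ Real.log (A * Real.exp (c' * t)) :=
        Real.log_le_log (Real.exp_pos _) (hGH t ht1)
      rwa [Real.log_exp, Real.log_mul hApos.ne' (Real.exp_pos _).ne', Real.log_exp] at h2
    have h3 : r * F t ≤ B + c' * t := le_trans h1 (by linarith [le_max_left (Real.log A) 0])
    have h5 : 2 * B ≤ r * δ * t := by
      have h6 : 2 * B / (r * δ) ≤ t - 1 := by linarith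
      rw [div_le_iff₀ (mul_pos hr hδ)] at h6
      nlinarith [mul_pos hr hδ]
    rw [hc'] at h3
    have h8 : u t = F t / t := one_div_mul_eq_div t (F t)
    rw [h8, div_le_iff₀ ht0]
    have h9 : r * F t ≤ c * t + r * δ * t := by nlinarith [h3, h5]
    have h10 : (c / r + δ) * t = (c * t + r * δ * t) / r := by field_simp
    rw [h10, le_div_iff₀ hr]
    linarith
  -- finish
  refine le_of_forall_pos_le_add ?_
  intro δ hδ
  exact limsup_le_of_le hcob (key δ hδ)
end

section
/- Let z : [0,∞) → ℝ be continuous and positive, α₃ > 0, and suppose there exist a constant c and a function ε : (0,∞) → ℝ with ε(t) → 0 such that for all t > 0: (1/t)·log(z(t)/z(0)) ≤ c − α₃·⟨z⟩(t) + ε(t), where ⟨z⟩(t) = (1/t)∫₀^t z(s)ds. Then limsup_{t→∞} ⟨z⟩(t) ≤ max(c,0)/α₃. -/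
open Filter MeasureTheory

theorem limsup_time_average_le_max (z : ℝ → ℝ) (α₃ c : ℝ) (ε : ℝ → ℝ)
    (hcont : Continuous z) (hpos : ∀ t, 0 < z t) (hα₃ : 0 < α₃)
    (hε : Tendsto ε atTop (nhds 0))
    (hineq : ∀ t > 0, (1 / t) * Real.log (z t / z 0) ≤
      c - α₃ * ((1 / t) * ∫ s in (0:ℝ)..t, z s) + ε t) :
    limsup (fun t : ℝ => (1 / t) * ∫ s in (0:ℝ)..t, z s) atTop ≤ max c 0 / α₃ := by
  set d : ℝ := max c 0 / α₃ with hd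
  have hd0 : 0 ≤ d := div_nonneg (le_max_right _ _) hα₃.le
  have hαd : α₃ * d = max c 0 := by rw [hd]; field_simp
  clear_value d
  set y : ℝ → ℝ := fun t => ∫ s in (0:ℝ)..t, z s with hy
  have hzint : ∀ a b : ℝ, IntervalIntegrable z volume a b := fun a b =>
    hcont.intervalIntegrable a b
  have hycont : Continuous y := intervalIntegral.continuous_primitive hzint 0
  have hAnn : ∀ᶠ t in atTop, (0:ℝ) ≤ (1 / t) * y t := by
    filter_upwards [eventually_gt_atTop (0:ℝ)] with t ht
    exact mul_nonneg (by positivity) (intervalIntegral.integral_nonneg ht.le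
      (fun u _ => (hpos u).le))
  -- key step
  have key : ∀ b : ℝ, d < b → ∀ᶠ t in atTop, (1 / t) * y t ≤ b := by
    intro b hb
    set b' : ℝ := (d + b) / 2 with hb'
    have hdb' : d < b' := by rw [hb']; linarith
    have hb'b : b' < b := by rw [hb']; linarith
    have hb'0 : 0 < b' := lt_of_le_of_lt hd0 hdb'
    clear_value b'
    set κ : ℝ := (α₃ * b' - c) / 2 with hκdef
    have hcb' : c < α₃ * b' := by
      have : c ≤ α₃ * d := by rw [hαd]; exact le_max_left _ _
      nlinarith [mul_lt_mul_of_pos_left hdb' hα₃]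
    have hκ : 0 < κ := by rw [hκdef]; linarith
    have hcκ : c - α₃ * b' + κ = -κ := by rw [hκdef]; ring
    clear_value κ
    -- choose T
    have h1 : ∀ᶠ t in atTop, ε t ≤ κ := by
      exact hε.eventually (eventually_le_nhds hκ)
    have h2 : Tendsto (fun t : ℝ => z 0 * Real.exp (-κ * t)) atTop (nhds 0) := by
      have : Tendsto (fun t : ℝ => Real.exp (-κ * t)) atTop (nhds 0) := by
        apply Real.tendsto_exp_atBot.comp
        exact Tendsto.const_mul_atTop_of_neg (by linarith) tendsto_id
      simpa using this.const_mul (z 0)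
    have h2' : ∀ᶠ t in atTop, z 0 * Real.exp (-κ * t) ≤ b' := by
      exact h2.eventually (eventually_le_nhds hb'0)
    obtain ⟨T, hT⟩ := (((h1.and h2').and (eventually_ge_atTop (1:ℝ))).and
      (eventually_forall_ge_atTop.mpr h1)).exists
    obtain ⟨⟨⟨hTε, hTexp⟩, hT1⟩, hTεall⟩ := hT
    have hT0 : (0:ℝ) < T := lt_of_lt_of_le one_pos hT1
    set K : ℝ := |y T - b' * T| + 1 with hK
    have hK1 : (1:ℝ) ≤ K := by have := abs_nonneg (y T - b' * T); linarith
    have hKT : y T - b' * T ≤ K - 1 := by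
      have := le_abs_self (y T - b' * T); linarith
    clear_value K
    -- claim: ∀ t ≥ T, y t - b' * t < K
    have claim : ∀ t, T ≤ t → y t - b' * t < K := by
      by_contra hcon
      push_neg at hcon
      obtain ⟨t₁, ht₁T, ht₁K⟩ := hcon
      -- S : set of crossing times, t* its inf
      set S : Set ℝ := {t | T ≤ t ∧ K ≤ y t - b' * t} with hS
      have hSne : S.Nonempty := ⟨t₁, ht₁T, ht₁K⟩
      have hSbdd : BddBelow S := ⟨T, fun x hx => hx.1⟩
      have hSclosed : IsClosed S := by
        have : S = Set.Ici T ∩ {t | K ≤ y t - b' * t} := rfl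
        rw [this]
        exact isClosed_Ici.inter (isClosed_le continuous_const
          (hycont.sub (continuous_const.mul continuous_id)))
      have htstar := hSclosed.csInf_mem hSne hSbdd
      set ts : ℝ := sInf S with hts
      obtain ⟨hTts, hKts⟩ := htstar
      -- S₂ : last time before ts that g ≤ K - 1/2
      set S₂ : Set ℝ := {s | s ∈ Set.Icc T ts ∧ y s - b' * s ≤ K - 1/2} with hS₂
      have hS₂ne : S₂.Nonempty := ⟨T, ⟨le_refl T, hTts⟩, by linarith⟩
      have hS₂bdd : BddAbove S₂ := ⟨ts, fun x hx => hx.1.2⟩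
      have hS₂closed : IsClosed S₂ := by
        have : S₂ = Set.Icc T ts ∩ {s | y s - b' * s ≤ K - 1/2} := rfl
        rw [this]
        exact isClosed_Icc.inter (isClosed_le
          (hycont.sub (continuous_const.mul continuous_id)) continuous_const)
      have ht₀ := hS₂closed.csSup_mem hS₂ne hS₂bdd
      set t₀ : ℝ := sSup S₂ with ht₀def
      obtain ⟨⟨hTt₀, ht₀ts⟩, ht₀K⟩ := ht₀
      have ht₀lt : t₀ < ts := by
        rcases lt_or_eq_of_le ht₀ts with h | h
        · exact h
        · exfalso; rw [h] at ht₀K; linarith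
      -- on Ioc t₀ ts, g > K - 1/2, hence z small
      have hgbig : ∀ s ∈ Set.Ioc t₀ ts, K - 1/2 < y s - b' * s := by
        intro s hs
        by_contra hle
        push_neg at hle
        have : s ∈ S₂ := ⟨⟨le_trans hTt₀ hs.1.le, hs.2⟩, hle⟩
        exact absurd (le_csSup hS₂bdd this) (not_le_of_gt hs.1)
      have hzsmall : ∀ s ∈ Set.Ioc t₀ ts, z s ≤ z 0 * Real.exp (-κ * s) := by
        intro s hs
        have hsT : T ≤ s := le_trans hTt₀ hs.1.le
        have hs0 : 0 < s := lt_of_lt_of_le hT0 hsT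
        have hys : b' * s ≤ y s := by
          have := hgbig s hs; linarith
        have hAs : b' ≤ (1 / s) * y s := by
          rw [one_div, inv_mul_eq_div, le_div_iff₀ hs0]
          linarith
        have hin := hineq s hs0
        have hεs : ε s ≤ κ := hTεall s hsT
        have : (1 / s) * Real.log (z s / z 0) ≤ -κ := by
          have hmul : α₃ * b' ≤ α₃ * ((1 / s) * y s) :=
            mul_le_mul_of_nonneg_left hAs hα₃.le
          have : (1 / s) * Real.log (z s / z 0) ≤ c - α₃ * b' + κ := by
            calc (1 / s) * Real.log (z s / z 0)
                ≤ c - α₃ * ((1 / s) * y s) + ε s := hin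
              _ ≤ c - α₃ * b' + κ := by linarith
          linarith [hcκ ▸ this]
        have hlog : Real.log (z s / z 0) ≤ -κ * s := by
          have := mul_le_mul_of_nonneg_left this hs0.le
          calc Real.log (z s / z 0) = s * ((1 / s) * Real.log (z s / z 0)) := by
                field_simp
            _ ≤ s * (-κ) := this
            _ = -κ * s := by ring
        have hdiv : z s / z 0 ≤ Real.exp (-κ * s) :=
          (Real.log_le_iff_le_exp (div_pos (hpos s) (hpos 0))).mp hlog
        calc z s = (z s / z 0) * z 0 := (div_mul_cancel₀ (z s) (hpos 0).ne').symm
          _ ≤ Real.exp (-κ * s) * z 0 := by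
              exact mul_le_mul_of_nonneg_right hdiv (hpos 0).le
          _ = z 0 * Real.exp (-κ * s) := by ring
      have hzb' : ∀ s ∈ Set.Icc t₀ ts, z s ≤ b' := by
        have hIoc : ∀ s ∈ Set.Ioc t₀ ts, z s ≤ b' := by
          intro s hs
          have hsT : T ≤ s := le_trans hTt₀ hs.1.le
          calc z s ≤ z 0 * Real.exp (-κ * s) := hzsmall s hs
            _ ≤ z 0 * Real.exp (-κ * T) := by
                apply mul_le_mul_of_nonneg_left _ (hpos 0).le
                exact Real.exp_le_exp.mpr (by nlinarith)
            _ ≤ b' := hTexp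
        intro s hs
        rcases eq_or_lt_of_le hs.1 with h | h
        · -- s = t₀ : by continuity from the right
          rw [← h]
          have hmem : Set.Ioc t₀ ts ∈ nhdsWithin t₀ (Set.Ioi t₀) :=
            Ioc_mem_nhdsGT ht₀lt
          have htd : Tendsto z (nhdsWithin t₀ (Set.Ioi t₀)) (nhds (z t₀)) :=
            (hcont.tendsto t₀).mono_left nhdsWithin_le_nhds
          exact le_of_tendsto htd (Filter.eventually_of_mem hmem
            (fun x hx => hIoc x hx))
        · exact hIoc s ⟨h, hs.2⟩
      -- integral comparison
      have hint : y ts = y t₀ + ∫ s in t₀..ts, z s := by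
        rw [hy]
        simp only
        exact (intervalIntegral.integral_add_adjacent_intervals (hzint 0 t₀) (hzint t₀ ts)).symm
      have hintle : (∫ s in t₀..ts, z s) ≤ b' * (ts - t₀) := by
        calc (∫ s in t₀..ts, z s) ≤ ∫ _ in t₀..ts, b' :=
              intervalIntegral.integral_mono_on ht₀lt.le (hzint t₀ ts)
                intervalIntegrable_const hzb'
          _ = b' * (ts - t₀) := by rw [intervalIntegral.integral_const, smul_eq_mul]; ring
      -- contradiction
      have h5 : y ts - y t₀ ≤ b' * (ts - t₀) := by rw [hint]; linarith
      nlinarith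
    -- conclude eventual bound
    filter_upwards [eventually_ge_atTop (max T (K / (b - b'))), eventually_gt_atTop (0:ℝ)]
      with t ht ht0
    have htT : T ≤ t := le_trans (le_max_left _ _) ht
    have htK : K / (b - b') ≤ t := le_trans (le_max_right _ _) ht
    have hyt : y t - b' * t < K := claim t htT
    have hKt : K ≤ (b - b') * t := by
      rw [div_le_iff₀ (by linarith : (0:ℝ) < b - b')] at htK
      linarith [htK]
    have : y t ≤ b * t := by nlinarith
    calc (1 / t) * y t ≤ (1 / t) * (b * t) := by
          exact mul_le_mul_of_nonneg_left this (by positivity)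
      _ = b := by field_simp
  -- finish via limsup
  apply le_of_forall_gt_imp_ge_of_dense
  intro b hb
  exact limsup_le_of_le (isCoboundedUnder_le_of_eventually_le atTop hAnn) (key b hb)
end
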